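/- Let ρ be a unital *-endomorphism of a unital C*-algebra A with a weak permutation symmetry ε. Then the tensor product of symmetry intertwiners is symmetric: for all t ∈ (ρ^r,ρ^s)_ε and t' ∈ (ρ^{r'},ρ^{s'})_ε one has ε(s,s')·t·ρ^r(t') = t'·ρ^{r'}(t)·ε(r,r'). -/

import Mathlib

/-- The predicate defining the group `ℙ_∞`: a permutation of `ℕ` belongs to `ℙ_∞`
iff it moves only finitely many points. -/
def HasFiniteSupp (p : Equiv.Perm ℕ) : Prop := {x : ℕ | p x ≠ x}.Finite

/-- Auxiliary function for the shift. -/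
def shiftFun (f : ℕ → ℕ) : ℕ → ℕ
  | 0 => 0
  | n + 1 => f n + 1

/-- The shift `𝕊` on permutations of `ℕ` (`0`-indexed): `(𝕊p)(0) = 0`,
`(𝕊p)(n+1) = p(n)+1`. -/
def shiftPerm (p : Equiv.Perm ℕ) : Equiv.Perm ℕ where
  toFun := shiftFun p
  invFun := shiftFun p.symm
  left_inv := by intro n; cases n <;> simp [shiftFun]
  right_inv := by intro n; cases n <;> simp [shiftFun]

/-- Auxiliary function for the block permutation. -/
def blockFun (r s : ℕ) (n : ℕ) : ℕ :=
  if n < r then n + s else if n < r + s then n - r else n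

/-- The block permutation `(r,s) ∈ ℙ_{r+s}` permuting the first `r` terms with the
remaining `s` (`0`-indexed: `i ↦ i+s` for `i < r`, `i ↦ i-r` for `r ≤ i < r+s`,
fixing all other points). -/
def blockPerm (r s : ℕ) : Equiv.Perm ℕ where
  toFun := blockFun r s
  invFun := blockFun s r
  left_inv := by intro n; simp only [blockFun]; split_ifs <;> omega
  right_inv := by intro n; simp only [blockFun]; split_ifs <;> omega

/-- A weak permutation symmetry for the unital *-endomorphism `ρ` of `A`: a group
homomorphism `p ↦ ε(p)` from `ℙ_∞` into the unitary group of `A` such that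
`ε(𝕊p) = ρ(ε(p))` for all `p ∈ ℙ_∞` and `ε(p) ∈ (ρ^n, ρ^n)` for all `p ∈ ℙ_n`
(where `ℙ_n` is the subgroup of permutations fixing every point out of the first `n`). -/
structure WeakPermSymm {A : Type*} [NormedRing A] [StarRing A] [CStarRing A]
    [CompleteSpace A] [NormedAlgebra ℂ A] [StarModule ℂ A]
    (ρ : A →⋆ₐ[ℂ] A) (ε : Equiv.Perm ℕ → A) : Prop where
  map_one : ε 1 = 1
  map_mul : ∀ p q : Equiv.Perm ℕ, HasFiniteSupp p → HasFiniteSupp q →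
    ε (p * q) = ε p * ε q
  mem_unitary : ∀ p : Equiv.Perm ℕ, HasFiniteSupp p → ε p ∈ unitary A
  shift : ∀ p : Equiv.Perm ℕ, HasFiniteSupp p → ε (shiftPerm p) = ρ (ε p)
  comm : ∀ (n : ℕ) (p : Equiv.Perm ℕ), (∀ m : ℕ, n ≤ m → p m = m) →
    ∀ a : A, ε p * (⇑ρ)^[n] a = (⇑ρ)^[n] a * ε p

variable {A : Type*} [NormedRing A] [StarRing A] [CStarRing A] [CompleteSpace A]
  [NormedAlgebra ℂ A] [StarModule ℂ A]

/-- The intertwiner space `(ρ^r, ρ^s) := {t ∈ A : ρ^s(a)·t = t·ρ^r(a) ∀ a ∈ A}`. -/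
def IsIntertwiner (ρ : A →⋆ₐ[ℂ] A) (r s : ℕ) (t : A) : Prop :=
  ∀ a : A, (⇑ρ)^[s] a * t = t * (⇑ρ)^[r] a

/-- The symmetry intertwiner space
`(ρ^r, ρ^s)_ε := {t ∈ (ρ^r, ρ^s) : ε(s,1)·t = ρ(t)·ε(r,1)}`. -/
def IsSymIntertwiner (ρ : A →⋆ₐ[ℂ] A) (ε : Equiv.Perm ℕ → A) (r s : ℕ) (t : A) : Prop :=
  IsIntertwiner ρ r s t ∧ ε (blockPerm s 1) * t = ρ t * ε (blockPerm r 1)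

section Aux

lemma blockPerm_apply (r s n : ℕ) : blockPerm r s n = blockFun r s n := rfl

lemma hasFiniteSupp_of_bound (p : Equiv.Perm ℕ) (N : ℕ) (h : ∀ n, N ≤ n → p n = n) :
    HasFiniteSupp p :=
  Set.Finite.subset (Set.finite_Iio N) (fun x hx => by
    by_contra hx'
    exact hx (h x (not_lt.mp hx')))

lemma blockPerm_fix (r s : ℕ) : ∀ n, r + s ≤ n → blockPerm r s n = n := by
  intro n h
  simp only [blockPerm_apply, blockFun]
  split_ifs <;> omega

lemma hfs_blockPerm (r s : ℕ) : HasFiniteSupp (blockPerm r s) :=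
  hasFiniteSupp_of_bound _ (r + s) (blockPerm_fix r s)

lemma shiftPerm_apply (p : Equiv.Perm ℕ) (n : ℕ) : shiftPerm p n = shiftFun p n := rfl

lemma shiftIter_apply (p : Equiv.Perm ℕ) (m n : ℕ) :
    (shiftPerm^[m] p) n = if n < m then n else p (n - m) + m := by
  induction m generalizing n with
  | zero => simp
  | succ m ih =>
    rw [Function.iterate_succ_apply']
    cases n with
    | zero => simp [shiftPerm_apply, shiftFun]
    | succ k =>
      rw [shiftPerm_apply]
      show (shiftPerm^[m] p) k + 1 = _
      rw [ih, Nat.succ_sub_succ]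
      by_cases h : k < m
      · simp [h, Nat.succ_lt_succ h]
      · simp only [h, if_false]
        rw [if_neg (by omega)]
        omega

lemma shiftIter_blockPerm_fix (m r : ℕ) :
    ∀ n, m + r + 1 ≤ n → (shiftPerm^[m] (blockPerm r 1)) n = n := by
  intro n hn
  rw [shiftIter_apply, if_neg (by omega), blockPerm_fix r 1 _ (by omega)]
  omega

lemma hfs_shiftIter_blockPerm (m r : ℕ) : HasFiniteSupp (shiftPerm^[m] (blockPerm r 1)) :=
  hasFiniteSupp_of_bound _ (m + r + 1) (shiftIter_blockPerm_fix m r)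

lemma blockPerm_zero (r : ℕ) : blockPerm r 0 = 1 := by
  ext n
  simp only [blockPerm_apply, blockFun, Equiv.Perm.one_apply]
  split_ifs <;> omega

lemma blockPerm_succ (r m : ℕ) :
    blockPerm r (m + 1) = shiftPerm^[m] (blockPerm r 1) * blockPerm r m := by
  ext n
  rw [Equiv.Perm.mul_apply, shiftIter_apply]
  simp only [blockPerm_apply, blockFun]
  split_ifs <;> omega

lemma blockPerm_mul_inv (a b : ℕ) : blockPerm a b * blockPerm b a = 1 := by
  ext n
  rw [Equiv.Perm.mul_apply]
  simp only [blockPerm_apply, blockFun, Equiv.Perm.one_apply]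
  split_ifs <;> omega

end Aux

section Aux2

variable {A : Type*} [NormedRing A] [StarRing A] [CStarRing A] [CompleteSpace A]
  [NormedAlgebra ℂ A] [StarModule ℂ A]

lemma iter_map_mul (ρ : A →⋆ₐ[ℂ] A) (m : ℕ) (a b : A) :
    (⇑ρ)^[m] (a * b) = (⇑ρ)^[m] a * (⇑ρ)^[m] b := by
  induction m generalizing a b with
  | zero => rfl
  | succ m ih => simp [Function.iterate_succ_apply', ih, map_mul]

lemma eps_shiftIter (ρ : A →⋆ₐ[ℂ] A) (ε : Equiv.Perm ℕ → A) (hws : WeakPermSymm ρ ε)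
    (m r : ℕ) :
    ε (shiftPerm^[m] (blockPerm r 1)) = (⇑ρ)^[m] (ε (blockPerm r 1)) := by
  induction m with
  | zero => rfl
  | succ m ih =>
    rw [Function.iterate_succ_apply', hws.shift _ (hfs_shiftIter_blockPerm m r), ih,
      Function.iterate_succ_apply']

lemma eps_blockPerm_mul_self (ρ : A →⋆ₐ[ℂ] A) (ε : Equiv.Perm ℕ → A)
    (hws : WeakPermSymm ρ ε) (a b : ℕ) :
    ε (blockPerm a b) * ε (blockPerm b a) = 1 := by
  rw [← hws.map_mul _ _ (hfs_blockPerm a b) (hfs_blockPerm b a), blockPerm_mul_inv,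
    hws.map_one]

/-- Key lemma: the symmetry relation of a symmetry intertwiner extends from `m = 1`
to all `m`. -/
lemma symIntertwiner_eps_comm (ρ : A →⋆ₐ[ℂ] A) (ε : Equiv.Perm ℕ → A)
    (hws : WeakPermSymm ρ ε) (r s : ℕ) (t : A) (ht : IsSymIntertwiner ρ ε r s t) (m : ℕ) :
    ε (blockPerm s m) * t = (⇑ρ)^[m] t * ε (blockPerm r m) := by
  induction m with
  | zero => simp [blockPerm_zero, hws.map_one]
  | succ m ih =>
    calc ε (blockPerm s (m + 1)) * t
        = (⇑ρ)^[m] (ε (blockPerm s 1)) * (ε (blockPerm s m) * t) := by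
          rw [blockPerm_succ,
            hws.map_mul _ _ (hfs_shiftIter_blockPerm m s) (hfs_blockPerm s m),
            eps_shiftIter ρ ε hws, mul_assoc]
      _ = ((⇑ρ)^[m] (ε (blockPerm s 1)) * (⇑ρ)^[m] t) * ε (blockPerm r m) := by
          rw [ih, mul_assoc]
      _ = (⇑ρ)^[m] (ε (blockPerm s 1) * t) * ε (blockPerm r m) := by
          rw [iter_map_mul]
      _ = (⇑ρ)^[m] (ρ t * ε (blockPerm r 1)) * ε (blockPerm r m) := by
          rw [ht.2]
      _ = (⇑ρ)^[m + 1] t * ((⇑ρ)^[m] (ε (blockPerm r 1)) * ε (blockPerm r m)) := by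
          rw [iter_map_mul, Function.iterate_succ_apply, mul_assoc]
      _ = (⇑ρ)^[m + 1] t * ε (blockPerm r (m + 1)) := by
          rw [← eps_shiftIter ρ ε hws,
            ← hws.map_mul _ _ (hfs_shiftIter_blockPerm m r) (hfs_blockPerm r m),
            ← blockPerm_succ]

end Aux2

/-- Let `ρ` be a unital *-endomorphism of a unital C*-algebra `A` with
a weak permutation symmetry `ε`.  Then the tensor product of symmetry intertwiners is
symmetric: for all `t ∈ (ρ^r, ρ^s)_ε` and `t' ∈ (ρ^{r'}, ρ^{s'})_ε` one has
`ε(s,s')·t·ρ^r(t') = t'·ρ^{r'}(t)·ε(r,r')`. -/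
theorem symIntertwiner_tensor_symmetric
    (ρ : A →⋆ₐ[ℂ] A) (ε : Equiv.Perm ℕ → A) (hws : WeakPermSymm ρ ε)
    (r s r' s' : ℕ) (t t' : A)
    (ht : IsSymIntertwiner ρ ε r s t) (ht' : IsSymIntertwiner ρ ε r' s' t') :
    ε (blockPerm s s') * (t * (⇑ρ)^[r] t')
      = t' * (⇑ρ)^[r'] t * ε (blockPerm r r') := by
  have L_t' := symIntertwiner_eps_comm ρ ε hws r' s' t' ht' s
  have L_t := symIntertwiner_eps_comm ρ ε hws r s t ht r'
  have inv1 := eps_blockPerm_mul_self ρ ε hws r' s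
  have inv2 := eps_blockPerm_mul_self ρ ε hws s s'
  have hrho : (⇑ρ)^[s] t' = ε (blockPerm s' s) * t' * ε (blockPerm s r') := by
    have := congrArg (· * ε (blockPerm s r')) L_t'
    rw [mul_assoc, mul_assoc, inv1, mul_one] at this
    rw [← this, mul_assoc]
  calc ε (blockPerm s s') * (t * (⇑ρ)^[r] t')
      = ε (blockPerm s s') * ((⇑ρ)^[s] t' * t) := by rw [ht.1 t']
    _ = (ε (blockPerm s s') * ε (blockPerm s' s)) * t' * (ε (blockPerm s r') * t) := by
        rw [hrho]; simp only [mul_assoc]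
    _ = t' * (ε (blockPerm s r') * t) := by rw [inv2, one_mul]
    _ = t' * (⇑ρ)^[r'] t * ε (blockPerm r r') := by rw [L_t, mul_assoc]
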